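/- If s is a nonnegative differentiable function satisfying s'(t) ≤ c + r·s(t) − ξ₃·s(t)² for all t ≥ 0, where c, r, ξ₃ > 0, then limsup_{t→∞} s(t) ≤ (r + √(r² + 4ξ₃c))/(2ξ₃). -/

import Mathlib

/-!
Write `M` for the positive root of `ξ₃ x² - r x - c`. For any level `K > M` the right-hand side
`c + r x - ξ₃ x²` is at most `-δ < 0` as soon as `x ≥ K`. Hence `s` cannot stay above `K` forever
(it would decrease at a linear rate), and once it is at or below `K` it can never cross `K` upwards.
So `s ≤ K` eventually, for every `K > M`.
-/

open Filter Set

section Quadratic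

variable {a b c x y : ℝ}

theorem quadratic_pos_of_largest_root_lt (ha : 0 < a) (hD : 0 ≤ b ^ 2 + 4 * a * c)
    (hx : (b + √(b ^ 2 + 4 * a * c)) / (2 * a) < x) : 0 < a * x ^ 2 - b * x - c := by
  rw [div_lt_iff₀ (by positivity)] at hx
  -- `2 a x - b > √D ≥ 0`; squaring gives `4 a (a x² - b x - c) > 0`.
  have hsq := Real.sq_sqrt hD
  have hroot_nonneg := Real.sqrt_nonneg (b ^ 2 + 4 * a * c)
  have : 0 < a * (a * x ^ 2 - b * x - c) := by nlinarith
  exact pos_of_mul_pos_right this ha.le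

theorem quadratic_le_of_largest_root_lt_of_le (ha : 0 < a)
    (hy : (b + √(b ^ 2 + 4 * a * c)) / (2 * a) < y) (hyx : y ≤ x) :
    a * y ^ 2 - b * y - c ≤ a * x ^ 2 - b * x - c := by
  rw [div_lt_iff₀ (by positivity)] at hy
  have hroot_nonneg := Real.sqrt_nonneg (b ^ 2 + 4 * a * c)
  nlinarith [mul_nonneg (sub_nonneg.mpr hyx) (by nlinarith : 0 ≤ a * (x + y) - b)]

end Quadratic

section Trapping

variable {f : ℝ → ℝ} {a K δ : ℝ}

theorem exists_le_of_deriv_le_neg (hf : Differentiable ℝ f) (hδ : 0 < δ)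
    (hderiv : ∀ t ≥ a, K ≤ f t → deriv f t ≤ -δ) : ∃ t ≥ a, f t ≤ K := by
  by_contra! habove
  have hderiv_int : ∀ u ∈ interior (Ici a), deriv f u ≤ -δ := fun u hu => by
    rw [interior_Ici, mem_Ioi] at hu
    exact hderiv u hu.le (habove u hu.le).le
  have hslope : ∀ t ≥ a, f t - f a ≤ -δ * (t - a) := fun t ht =>
    (convex_Ici a).image_sub_le_mul_sub_of_deriv_le hf.continuous.continuousOn
      hf.differentiableOn hderiv_int a (mem_Ici.mpr le_rfl) t ht ht
  set T := a + (f a - K) / δ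
  have hT : a ≤ T :=
    le_add_of_nonneg_right (div_nonneg (sub_nonneg.mpr (habove a le_rfl).le) hδ.le)
  have : -δ * (T - a) = K - f a := by simp only [T]; field_simp; ring
  linarith [habove T hT, hslope T hT]

theorem le_of_le_of_deriv_neg_at_level (hf : Differentiable ℝ f) (ha : f a ≤ K)
    (hderiv : ∀ t ≥ a, f t = K → deriv f t < 0) : ∀ t ≥ a, f t ≤ K := fun _ ht =>
  image_le_of_deriv_right_lt_deriv_boundary (B := fun _ => K) (B' := 0)
    hf.continuous.continuousOn (fun u _ => (hf u).hasDerivAt.hasDerivWithinAt) ha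
    (fun _ => hasDerivAt_const _ _) (fun u hu => hderiv u hu.1) ⟨ht, le_rfl⟩

theorem eventually_le_of_deriv_le_neg (hf : Differentiable ℝ f) (hδ : 0 < δ)
    (hderiv : ∀ t ≥ a, K ≤ f t → deriv f t ≤ -δ) : ∀ᶠ t in atTop, f t ≤ K := by
  obtain ⟨t₀, ht₀, hft₀⟩ := exists_le_of_deriv_le_neg hf hδ hderiv
  have htrap := le_of_le_of_deriv_neg_at_level hf hft₀ fun t ht hft =>
    (hderiv t (ht₀.trans ht) hft.ge).trans_lt (neg_lt_zero.mpr hδ)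
  exact eventually_atTop.mpr ⟨t₀, htrap⟩

end Trapping

theorem limsup_le_of_forall_gt_eventually_le {α β : Type*} [ConditionallyCompleteLinearOrder β]
    [DenselyOrdered β] {l : Filter α} [l.NeBot] {f : α → β} {M : β}
    (hbdd : IsBoundedUnder (· ≥ ·) l f) (h : ∀ K > M, ∀ᶠ t in l, f t ≤ K) :
    limsup f l ≤ M :=
  le_of_forall_gt_imp_ge_of_dense fun K hK => limsup_le_of_le hbdd.isCoboundedUnder_le (h K hK)

theorem nonsterile_limsup_bound_general (s : ℝ → ℝ) (c r ξ₃ : ℝ) (hc : 0 < c)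
    (hξ : 0 < ξ₃) (hdiff : Differentiable ℝ s) (hnn : ∀ t ≥ (0:ℝ), 0 ≤ s t)
    (hineq : ∀ t ≥ (0:ℝ), deriv s t ≤ c + r * s t - ξ₃ * (s t) ^ 2) :
    Filter.limsup s Filter.atTop ≤ (r + Real.sqrt (r ^ 2 + 4 * ξ₃ * c)) / (2 * ξ₃) := by
  have hD : 0 ≤ r ^ 2 + 4 * ξ₃ * c := by positivity
  have hbdd : IsBoundedUnder (· ≥ ·) atTop s :=
    isBoundedUnder_of_eventually_ge (eventually_atTop.mpr ⟨0, hnn⟩)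
  refine limsup_le_of_forall_gt_eventually_le hbdd fun K hK => ?_
  refine eventually_le_of_deriv_le_neg (a := 0) hdiff (quadratic_pos_of_largest_root_lt hξ hD hK)
    fun t ht hKt => ?_
  linarith [hineq t ht, quadratic_le_of_largest_root_lt_of_le hξ hK hKt]

theorem nonsterile_limsup_bound (s : ℝ → ℝ) (c r ξ₃ : ℝ) (hc : 0 < c) (hr : 0 < r)
    (hξ : 0 < ξ₃) (hdiff : Differentiable ℝ s) (hnn : ∀ t ≥ (0:ℝ), 0 ≤ s t)
    (hineq : ∀ t ≥ (0:ℝ), deriv s t ≤ c + r * s t - ξ₃ * (s t) ^ 2) :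
    Filter.limsup s Filter.atTop ≤ (r + Real.sqrt (r ^ 2 + 4 * ξ₃ * c)) / (2 * ξ₃) :=
  nonsterile_limsup_bound_general s c r ξ₃ hc hξ hdiff hnn hineq
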